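/- arXiv:0911.2325 — 6 statements merged into one kernel-verified Lean document; each statement's English description precedes it below -/
import Mathlib

section
/- For every natural number r ≥ 1, the maximum of f over the interval [r, r+1] equals 2^r and is attained at d_r^r = r + ε_r; that is, f(r + ε_r) = 2^r and f(x) ≤ 2^r for all x ∈ [r, r+1]. -/
/-- A real number is a dyadic rational if it has the form `m / 2^n`. -/
def IsDyadic (x : ℝ) : Prop := ∃ (m : ℤ) (n : ℕ), x = (m : ℝ) / 2 ^ n

/-- `eps a = Σ_{i=1}^{a} 4^{-i} = (1 - 4^{-a})/3`. -/
noncomputable def eps (a : ℕ) : ℝ := (1 - ((4 : ℝ)⁻¹) ^ a) / 3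

/-- The increasing breakpoints `d_j^r = r + ε_j`. -/
noncomputable def dpt (r j : ℕ) : ℝ := (r : ℝ) + eps j

/-- The decreasing breakpoints `e_j^r = r + 2ε_r − ε_j`. -/
noncomputable def ept (r j : ℕ) : ℝ := (r : ℝ) + 2 * eps r - eps j

/-- Affine interpolation on `[a,b]` with values `fa` at `a` and `fb` at `b`. -/
noncomputable def interp (a b fa fb x : ℝ) : ℝ := fa + (x - a) * (fb - fa) / (b - a)

/-- The specification of the function `f` of the paper:
on each interval `[r, r+1]`, `f(d_0^r) = 0`, `f(d_j^r) = f(e_j^r) = 2^j` for `1 ≤ j ≤ r`,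
`f = 0` on `[e_0^r, r+1]`, and `f` is affine between consecutive breakpoints. -/
def SpecF (f : ℝ → ℝ) : Prop :=
  ∀ r : ℕ,
    f (dpt r 0) = 0 ∧
    (∀ j : ℕ, 1 ≤ j → j ≤ r → f (dpt r j) = 2 ^ j ∧ f (ept r j) = 2 ^ j) ∧
    (∀ x ∈ Set.Icc (ept r 0) ((r : ℝ) + 1), f x = 0) ∧
    (∀ j : ℕ, j < r → ∀ x ∈ Set.Icc (dpt r j) (dpt r (j + 1)),
      f x = interp (dpt r j) (dpt r (j + 1)) (f (dpt r j)) (f (dpt r (j + 1))) x) ∧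
    (∀ j : ℕ, j < r → ∀ x ∈ Set.Icc (ept r (j + 1)) (ept r j),
      f x = interp (ept r (j + 1)) (ept r j) (f (ept r (j + 1))) (f (ept r j)) x)

lemma eps_zero : eps 0 = 0 := by simp [eps]

lemma eps_lt (a : ℕ) : eps a < eps (a+1) := by
  have h : (0:ℝ) < ((4:ℝ)⁻¹) ^ a := by positivity
  have h2 : ((4:ℝ)⁻¹) ^ (a+1) = ((4:ℝ)⁻¹) ^ a * 4⁻¹ := pow_succ _ _
  unfold eps
  rw [h2]
  nlinarith

lemma eps_nonneg (a : ℕ) : 0 ≤ eps a := by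
  have h : ((4:ℝ)⁻¹) ^ a ≤ 1 := pow_le_one₀ (by norm_num) (by norm_num)
  unfold eps; linarith

lemma eps_lt_third (a : ℕ) : eps a < 1/3 := by
  have h : (0:ℝ) < ((4:ℝ)⁻¹) ^ a := by positivity
  unfold eps; linarith

lemma interp_le {a b fa fb x M : ℝ} (hab : a < b) (h1 : a ≤ x) (h2 : x ≤ b)
    (ha : fa ≤ M) (hb : fb ≤ M) : interp a b fa fb x ≤ M := by
  have hba : (0:ℝ) < b - a := by linarith
  have h : (x - a) * (fb - fa) / (b - a) ≤ M - fa := by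
    rw [div_le_iff₀ hba]
    nlinarith [mul_nonneg (by linarith : (0:ℝ) ≤ b - x) (by linarith : (0:ℝ) ≤ M - fa),
      mul_nonneg (by linarith : (0:ℝ) ≤ x - a) (by linarith : (0:ℝ) ≤ M - fb)]
  unfold interp; linarith

lemma exists_seg (g : ℕ → ℝ) : ∀ n : ℕ, 1 ≤ n → ∀ x : ℝ, g 0 ≤ x → x ≤ g n →
    ∃ j, j < n ∧ g j ≤ x ∧ x ≤ g (j+1) := by
  intro n
  induction n with
  | zero => omega
  | succ n ih =>
    intro _ x h0 hn
    rcases Nat.eq_zero_or_pos n with rfl | hn1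
    · exact ⟨0, by omega, h0, hn⟩
    · rcases le_total x (g n) with h | h
      · obtain ⟨j, hj, h1, h2⟩ := ih hn1 x h0 h
        exact ⟨j, by omega, h1, h2⟩
      · exact ⟨n, by omega, h, hn⟩

/-- for every `r ≥ 1`, the maximum of `f` over `[r, r+1]` equals `2^r`
and is attained at `d_r^r = r + ε_r`. -/
theorem statement1 (f : ℝ → ℝ) (hf : SpecF f) :
    ∀ r : ℕ, 1 ≤ r →
      f ((r : ℝ) + eps r) = 2 ^ r ∧
      ∀ x ∈ Set.Icc (r : ℝ) ((r : ℝ) + 1), f x ≤ 2 ^ r := by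
  intro r hr
  obtain ⟨h0, hjv, hend, hd, he⟩ := hf r
  have hval : f (dpt r r) = 2 ^ r := (hjv r hr le_rfl).1
  have hpow : ∀ j : ℕ, j ≤ r → (2:ℝ) ^ j ≤ 2 ^ r := fun j hj =>
    pow_le_pow_right₀ (by norm_num) hj
  have hd0 : dpt r 0 = (r : ℝ) := by simp [dpt, eps_zero]
  have hee : ept r r = dpt r r := by unfold ept dpt; ring
  have he0 : ept r 0 ≤ (r : ℝ) + 1 := by
    have := eps_lt_third r
    unfold ept; rw [eps_zero]; linarith
  -- value of f at increasing breakpoints is ≤ 2^r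
  have hdval : ∀ j : ℕ, j ≤ r → f (dpt r j) ≤ 2 ^ r := by
    intro j hj
    rcases Nat.eq_zero_or_pos j with rfl | hj1
    · rw [h0]; positivity
    · rw [(hjv j hj1 hj).1]; exact hpow j hj
  have heval : ∀ j : ℕ, j ≤ r → f (ept r j) ≤ 2 ^ r := by
    intro j hj
    rcases Nat.eq_zero_or_pos j with rfl | hj1
    · rw [hend (ept r 0) ⟨le_rfl, he0⟩]; positivity
    · rw [(hjv j hj1 hj).2]; exact hpow j hj
  constructor
  · exact hval
  · rintro x ⟨hx1, hx2⟩
    rcases le_total x (dpt r r) with hc1 | hc1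
    · -- increasing part
      obtain ⟨j, hj, hxl, hxr⟩ := exists_seg (dpt r) r hr x (by rw [hd0]; exact hx1) hc1
      rw [hd j hj x ⟨hxl, hxr⟩]
      have hlt : dpt r j < dpt r (j+1) := by
        have := eps_lt j; unfold dpt; linarith
      exact interp_le hlt hxl hxr (hdval j (by omega)) (hdval (j+1) (by omega))
    · rcases le_total x (ept r 0) with hc2 | hc2
      · -- decreasing part
        obtain ⟨j, hj, hxl, hxr⟩ := exists_seg (fun j => ept r (r - j)) r hr x
          (by simpa [hee] using hc1) (by simpa using hc2)
        set k := r - (j+1) with hk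
        have hkr : k < r := by omega
        have hxl' : ept r (k+1) ≤ x := by
          have h' : r - j = k + 1 := by omega
          rw [← h']; exact hxl
        have hxr' : x ≤ ept r k := hxr
        rw [he k hkr x ⟨hxl', hxr'⟩]
        have hlt : ept r (k+1) < ept r k := by
          have := eps_lt k; unfold ept; linarith
        exact interp_le hlt hxl' hxr' (heval (k+1) (by omega)) (heval k (by omega))
      · rw [hend x ⟨hc2, hx2⟩]; positivity
end

section
/- The function f has no modulus of continuity that is polynomial in the extension argument: for every polynomial p with natural-number coefficients there exist k ∈ ℕ and x, y ∈ [0, 2^k] such that |x − y| ≤ 2^{-p(k)} and |f(x) − f(y)| > 1. -/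
/-- Eventually `c * k ^ d + 3 ≤ 2 ^ k`. -/
lemma exists_pow_dominates (c d : ℕ) : ∃ k : ℕ, c * k ^ d + 3 ≤ 2 ^ k := by
  have h := isLittleO_pow_const_const_pow_of_one_lt (R := ℝ) d (by norm_num : (1:ℝ) < 2)
  have hε : (0:ℝ) < 1 / (2 * (c + 1)) := by positivity
  have h1 := (h.def hε).and (Filter.eventually_atTop.2 ⟨3, fun k hk => hk⟩)
  obtain ⟨k, hk1, hk2⟩ := h1.exists
  refine ⟨k, ?_⟩
  have h2k : (0:ℝ) < 2 ^ k := by positivity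
  have hnorm : ((k:ℝ) ^ d) ≤ 1 / (2 * (c + 1)) * 2 ^ k := by
    simpa [Real.norm_eq_abs, abs_of_pos h2k,
      abs_of_nonneg (by positivity : (0:ℝ) ≤ (k:ℝ) ^ d)] using hk1
  have hkey : (c:ℝ) * (1 / (2 * (c + 1))) ≤ 1/2 := by
    rw [mul_one_div, div_le_div_iff₀ (by positivity) (by norm_num : (0:ℝ) < 2)]
    have := Nat.cast_nonneg (α := ℝ) c
    linarith
  have hck : (c:ℝ) * (k:ℝ) ^ d ≤ (1/2) * 2 ^ k := by
    calc (c:ℝ) * (k:ℝ) ^ d ≤ (c:ℝ) * (1 / (2 * (c + 1)) * 2 ^ k) :=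
          mul_le_mul_of_nonneg_left hnorm (by positivity)
      _ = (c:ℝ) * (1 / (2 * (c + 1))) * 2 ^ k := by ring
      _ ≤ (1/2) * 2 ^ k := mul_le_mul_of_nonneg_right hkey h2k.le
  have h3 : (3:ℝ) ≤ (1/2) * 2 ^ k := by
    have : (8:ℝ) ≤ 2 ^ k := by
      calc (8:ℝ) = 2 ^ 3 := by norm_num
        _ ≤ 2 ^ k := pow_le_pow_right₀ (by norm_num) hk2
    linarith
  have : (c:ℝ) * (k:ℝ) ^ d + 3 ≤ 2 ^ k := by linarith
  exact_mod_cast this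

lemma eval_le_aux (p : Polynomial ℕ) (k : ℕ) (hk : 1 ≤ k) :
    p.eval k ≤ p.eval 1 * k ^ p.natDegree := by
  rw [Polynomial.eval_eq_sum_range, Polynomial.eval_eq_sum_range, Finset.sum_mul]
  apply Finset.sum_le_sum
  intro i hi
  rw [Finset.mem_range] at hi
  calc p.coeff i * k ^ i ≤ p.coeff i * k ^ p.natDegree :=
        Nat.mul_le_mul_left _ (Nat.pow_le_pow_right hk (by omega))
    _ = p.coeff i * 1 ^ i * k ^ p.natDegree := by ring

lemma eps_succ_sub (m : ℕ) : eps (m + 1) - eps m = ((4:ℝ)⁻¹) ^ (m + 1) := by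
  simp only [eps]
  rw [pow_succ]
  ring

lemma eps_lt_one (a : ℕ) : eps a < 1 := by
  have : (0:ℝ) < ((4:ℝ)⁻¹) ^ a := by positivity
  simp only [eps]; linarith

/-- `f` has no modulus of continuity polynomial in the extension argument. -/
theorem statement4 (f : ℝ → ℝ) (hf : SpecF f) :
    ∀ p : Polynomial ℕ, ∃ k : ℕ, ∃ x ∈ Set.Icc (0 : ℝ) (2 ^ k), ∃ y ∈ Set.Icc (0 : ℝ) (2 ^ k),
      |x - y| ≤ (2 : ℝ) ^ (-((p.eval k : ℕ) : ℤ)) ∧ 1 < |f x - f y| := by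
  intro p
  obtain ⟨k, hk⟩ := exists_pow_dominates (p.eval 1) p.natDegree
  have hk1 : 1 ≤ k := by
    by_contra h
    interval_cases k <;> omega
  have hpk : p.eval k + 3 ≤ 2 ^ k := le_trans (by
    have := eval_le_aux p k hk1; omega) hk
  set m : ℕ := p.eval k + 1 with hm
  refine ⟨k, dpt (m+1) (m+1), ?_, dpt (m+1) m, ?_, ?_, ?_⟩
  · constructor
    · have := eps_nonneg (m+1)
      simp only [dpt]
      positivity
    · have h1 : ((m:ℝ) + 1) + 1 ≤ 2 ^ k := by
        have : (m + 1) + 1 ≤ 2 ^ k := by omega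
        exact_mod_cast this
      have := eps_lt_one (m+1)
      simp only [dpt]
      push_cast [hm] at h1 ⊢
      linarith
  · constructor
    · have := eps_nonneg m
      simp only [dpt]
      positivity
    · have h1 : ((m:ℝ) + 1) + 1 ≤ 2 ^ k := by
        have : (m + 1) + 1 ≤ 2 ^ k := by omega
        exact_mod_cast this
      have := eps_lt_one m
      simp only [dpt]
      push_cast [hm] at h1 ⊢
      linarith
  · have hsub : dpt (m+1) (m+1) - dpt (m+1) m = ((4:ℝ)⁻¹) ^ (m+1) := by
      simp only [dpt]
      rw [← eps_succ_sub m]; ring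
    have hpos : (0:ℝ) ≤ ((4:ℝ)⁻¹) ^ (m+1) := by positivity
    rw [hsub, abs_of_nonneg hpos]
    have h4 : ((4:ℝ)⁻¹) ^ (m+1) = (2:ℝ) ^ (-((2*(m+1) : ℕ) : ℤ)) := by
      have h41 : ((4:ℝ)⁻¹) ^ (m+1) = ((2:ℝ) ^ (2*(m+1) : ℕ))⁻¹ := by
        rw [pow_mul, ← inv_pow]; norm_num
      rw [h41, ← zpow_natCast (2:ℝ) (2*(m+1)), ← zpow_neg]
    rw [h4]
    apply zpow_le_zpow_right₀ (by norm_num : (1:ℝ) ≤ 2)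
    omega
  · have hfj : f (dpt (m+1) (m+1)) = 2 ^ (m+1) := ((hf (m+1)).2.1 (m+1) (by omega) le_rfl).1
    have hfm : f (dpt (m+1) m) = 2 ^ m := ((hf (m+1)).2.1 m (by omega) (by omega)).1
    rw [hfj, hfm]
    have heq : (2:ℝ) ^ (m+1) - 2 ^ m = 2 ^ m := by
      rw [pow_succ]; ring
    rw [heq, abs_of_nonneg (by positivity)]
    have : (2:ℝ) ^ 1 ≤ 2 ^ m := pow_le_pow_right₀ (by norm_num) (by omega)
    simpa using lt_of_lt_of_le (by norm_num) this
end

section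
/- The function g is well defined, continuous on [0,∞) (in particular continuous at the point 1), monotonically nonincreasing, and maps every dyadic rational in [0,∞) to a dyadic rational. -/
/-- The breakpoints `d_i = 1 - 2^{-i}`. -/
noncomputable def dbk (i : ℕ) : ℝ := 1 - (2 : ℝ) ^ (-(i : ℤ))

open Classical in
/-- `alpha i = max { j ≤ i : j = 2^(2^m) for some m }` (meaningful for `i ≥ 2`). -/
noncomputable def alpha (i : ℕ) : ℕ := Nat.findGreatest (fun j => ∃ m : ℕ, j = 2 ^ 2 ^ m) i

/-- The specification of the function `g` of the paper: `g = 1` on `[0, 1/2]`,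
`g(d_i) = 1/log₂(α(i))` for `i ≥ 2`, `g` is affine on each `[d_i, d_{i+1}]` for `i ≥ 1`,
and `g = 0` on `[1, ∞)`. -/
noncomputable def SpecG (g : ℝ → ℝ) : Prop :=
  (∀ x ∈ Set.Icc (0 : ℝ) (1 / 2), g x = 1) ∧
  (∀ i : ℕ, 2 ≤ i → g (dbk i) = 1 / Real.logb 2 (alpha i)) ∧
  (∀ i : ℕ, 1 ≤ i → ∀ x ∈ Set.Icc (dbk i) (dbk (i + 1)),
    g x = interp (dbk i) (dbk (i + 1)) (g (dbk i)) (g (dbk (i + 1))) x) ∧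
  (∀ x ∈ Set.Ici (1 : ℝ), g x = 0)

/-!
On `[d_i, d_{i+1}]` a function meeting the specification is forced to interpolate linearly
between `g(d_i) = 2^{-m}` (where `α(i) = 2^{2^m}`) and `g(d_{i+1})`, which gives uniqueness
and an explicit construction. These breakpoint values are nonincreasing and tend to `0`, so
gluing the affine pieces one interval at a time yields a continuous nonincreasing function on
`(-∞, 1)` that is squeezed to `0 = g(1)` near `1`. On `[d_i, d_{i+1}]` the slope is a difference
of dyadic values times `2^{i+1}`, so dyadic points are mapped to dyadic values.
-/

open Set Filter Topology

lemma interp_left (a b fa fb : ℝ) : interp a b fa fb a = fa := by simp [interp]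

lemma interp_right {a b : ℝ} (h : a ≠ b) (fa fb : ℝ) : interp a b fa fb b = fb := by
  have : b - a ≠ 0 := sub_ne_zero.2 h.symm
  simp [interp, this]

lemma continuous_interp (a b fa fb : ℝ) : Continuous (interp a b fa fb) := by
  unfold interp
  fun_prop

lemma antitone_interp {a b fa fb : ℝ} (hab : a < b) (hf : fb ≤ fa) :
    Antitone (interp a b fa fb) := by
  intro x y hxy
  have hslope : (fb - fa) / (b - a) ≤ 0 :=
    div_nonpos_of_nonpos_of_nonneg (by linarith) (by linarith)
  have := mul_le_mul_of_nonpos_right (sub_le_sub_right hxy a) hslope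
  simp only [interp, mul_div_assoc]
  linarith

lemma interp_mem_subring {S : Subring ℝ} {a b fa fb x : ℝ} (ha : a ∈ S) (hfa : fa ∈ S)
    (hfb : fb ∈ S) (hx : x ∈ S) (hba : (b - a)⁻¹ ∈ S) : interp a b fa fb x ∈ S := by
  rw [interp, mul_div_assoc, div_eq_mul_inv]
  exact add_mem hfa (mul_mem (sub_mem hx ha) (mul_mem (sub_mem hfb hfa) hba))

lemma dbk_eq (i : ℕ) : dbk i = 1 - 1 / 2 ^ i := by
  rw [dbk, zpow_neg, zpow_natCast, one_div]

lemma dbk_one : dbk 1 = 1 / 2 := by norm_num [dbk_eq]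

lemma dbk_lt_one (i : ℕ) : dbk i < 1 := by
  rw [dbk_eq]
  have : (0 : ℝ) < 1 / 2 ^ i := by positivity
  linarith

lemma dbk_strictMono : StrictMono dbk := by
  intro i j hij
  have : (1 : ℝ) / 2 ^ j < 1 / 2 ^ i :=
    one_div_lt_one_div_of_lt (by positivity) (pow_lt_pow_right₀ one_lt_two hij)
  rw [dbk_eq, dbk_eq]
  linarith

lemma half_le_dbk {i : ℕ} (hi : 1 ≤ i) : 1 / 2 ≤ dbk i :=
  dbk_one ▸ dbk_strictMono.monotone hi

lemma dbk_succ_sub (i : ℕ) : dbk (i + 1) - dbk i = 1 / 2 ^ (i + 1) := by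
  rw [dbk_eq, dbk_eq]
  field_simp
  ring

lemma tendsto_dbk : Tendsto dbk atTop (𝓝 1) := by
  have h : Tendsto (fun i : ℕ => (1 / 2 : ℝ) ^ i) atTop (𝓝 0) :=
    tendsto_pow_atTop_nhds_zero_of_lt_one (by norm_num) (by norm_num)
  convert h.const_sub 1 using 2 with i
  · rw [dbk_eq, one_div_pow]
  · simp

lemma exists_lt_dbk {x : ℝ} (hx : x < 1) : ∃ n, x < dbk (n + 1) :=
  ((tendsto_dbk.comp (tendsto_add_atTop_nat 1)).eventually (lt_mem_nhds hx)).exists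

lemma dbk_le_iff {x : ℝ} (hx : x < 1) (i : ℕ) :
    dbk i ≤ x ↔ (i : ℤ) ≤ Int.log 2 (1 / (1 - x)) := by
  have h1x : 0 < 1 - x := by linarith
  rw [← Int.zpow_le_iff_le_log one_lt_two (by positivity), dbk_eq, Nat.cast_ofNat, zpow_natCast,
    le_one_div (by positivity) h1x]
  exact sub_le_comm

/-- `x ∈ [d_i, d_{i+1})` iff `2^i ≤ 1/(1 - x) < 2^{i+1}`. -/
noncomputable def dbkIndex (x : ℝ) : ℕ := (Int.log 2 (1 / (1 - x))).toNat

lemma dbkIndex_eq {i : ℕ} {x : ℝ} (hx : x ∈ Ico (dbk i) (dbk (i + 1))) : dbkIndex x = i := by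
  have hx1 : x < 1 := hx.2.trans (dbk_lt_one _)
  have hle := (dbk_le_iff hx1 i).1 hx.1
  have hlt := mt (dbk_le_iff hx1 (i + 1)).2 (not_le.2 hx.2)
  push_cast at hlt
  rw [dbkIndex]
  omega

lemma mem_Ico_dbkIndex {x : ℝ} (hx : x ∈ Ico (1 / 2) 1) :
    1 ≤ dbkIndex x ∧ x ∈ Ico (dbk (dbkIndex x)) (dbk (dbkIndex x + 1)) := by
  have h1 := (dbk_le_iff hx.2 1).1 (dbk_one ▸ hx.1)
  have hidx : (dbkIndex x : ℤ) = Int.log 2 (1 / (1 - x)) := by rw [dbkIndex]; omega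
  refine ⟨by rw [dbkIndex]; omega, (dbk_le_iff hx.2 _).2 hidx.le, not_le.1 fun h => ?_⟩
  have := (dbk_le_iff hx.2 _).1 h
  push_cast at this
  omega

def towerLog (i : ℕ) : ℕ := Nat.log 2 (Nat.log 2 i)

lemma alpha_eq {i : ℕ} (hi : 2 ≤ i) : alpha i = 2 ^ 2 ^ towerLog i := by
  have hi0 : i ≠ 0 := by omega
  have hlog : Nat.log 2 i ≠ 0 := by
    rw [← Nat.pos_iff_ne_zero, Nat.log_pos_iff]
    omega
  classical
  rw [alpha, Nat.findGreatest_eq_iff]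
  refine ⟨?_, fun _ => ⟨towerLog i, rfl⟩, ?_⟩
  · calc 2 ^ 2 ^ towerLog i ≤ 2 ^ Nat.log 2 i :=
          Nat.pow_le_pow_right two_pos (Nat.pow_log_le_self 2 hlog)
      _ ≤ i := Nat.pow_log_le_self 2 hi0
  · rintro k hk hki ⟨m, rfl⟩
    have hm : m ≤ towerLog i :=
      (Nat.le_log_iff_pow_le one_lt_two hlog).2 ((Nat.le_log_iff_pow_le one_lt_two hi0).2 hki)
    have : 2 ^ 2 ^ m ≤ 2 ^ 2 ^ towerLog i :=
      Nat.pow_le_pow_right two_pos (Nat.pow_le_pow_right two_pos hm)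
    omega

noncomputable def gBreak (i : ℕ) : ℝ := 1 / 2 ^ towerLog i

lemma gBreak_pos (i : ℕ) : 0 < gBreak i := by
  rw [gBreak]
  positivity

lemma gBreak_one : gBreak 1 = 1 := by simp [gBreak, towerLog]

lemma gBreak_antitone : Antitone gBreak := fun i j hij =>
  one_div_le_one_div_of_le (by positivity) <| pow_le_pow_right₀ one_le_two <|
    Nat.log_mono_right (Nat.log_mono_right hij)

lemma one_div_logb_alpha {i : ℕ} (hi : 2 ≤ i) : 1 / Real.logb 2 (alpha i) = gBreak i := by
  rw [alpha_eq hi, gBreak, Nat.cast_pow, Nat.cast_ofNat, Real.logb_pow,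
    Real.logb_self_eq_one one_lt_two, mul_one, Nat.cast_pow, Nat.cast_ofNat]

lemma exists_gBreak_lt {ε : ℝ} (hε : 0 < ε) : ∃ k, 1 ≤ k ∧ gBreak k < ε := by
  obtain ⟨N, hN⟩ := exists_pow_lt_of_lt_one hε (by norm_num : (1 / 2 : ℝ) < 1)
  refine ⟨2 ^ 2 ^ N, Nat.one_le_two_pow, ?_⟩
  rwa [gBreak, towerLog, Nat.log_pow one_lt_two, Nat.log_pow one_lt_two, ← one_div_pow]

noncomputable def gFun (x : ℝ) : ℝ :=
  if x ≤ 1 / 2 then 1 else if 1 ≤ x then 0 else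
    interp (dbk (dbkIndex x)) (dbk (dbkIndex x + 1)) (gBreak (dbkIndex x))
      (gBreak (dbkIndex x + 1)) x

lemma gFun_of_le_half {x : ℝ} (hx : x ≤ 1 / 2) : gFun x = 1 := if_pos hx

lemma gFun_of_one_le {x : ℝ} (hx : 1 ≤ x) : gFun x = 0 := by
  rw [gFun, if_neg (by linarith), if_pos hx]

lemma gFun_of_mem_Ico {i : ℕ} {x : ℝ} (hx : x ∈ Ico (dbk i) (dbk (i + 1))) (hx2 : 1 / 2 < x) :
    gFun x = interp (dbk i) (dbk (i + 1)) (gBreak i) (gBreak (i + 1)) x := by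
  rw [gFun, if_neg hx2.not_ge, if_neg (hx.2.trans (dbk_lt_one _)).not_ge, dbkIndex_eq hx]

lemma gFun_dbk {i : ℕ} (hi : 1 ≤ i) : gFun (dbk i) = gBreak i := by
  obtain rfl | hi := hi.eq_or_lt
  · rw [dbk_one, gFun_of_le_half le_rfl, gBreak_one]
  · have hx : dbk i ∈ Ico (dbk i) (dbk (i + 1)) := ⟨le_rfl, dbk_strictMono i.lt_succ_self⟩
    rw [gFun_of_mem_Ico hx (dbk_one ▸ dbk_strictMono hi), interp_left]

lemma gFun_eqOn_Icc {i : ℕ} (hi : 1 ≤ i) :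
    EqOn gFun (interp (dbk i) (dbk (i + 1)) (gBreak i) (gBreak (i + 1)))
      (Icc (dbk i) (dbk (i + 1))) := by
  rintro x ⟨hl, hr⟩
  obtain rfl | hr := hr.eq_or_lt
  · rw [gFun_dbk (by omega), interp_right (dbk_strictMono i.lt_succ_self).ne]
  obtain rfl | hl := hl.eq_or_lt
  · rw [gFun_dbk hi, interp_left]
  · exact gFun_of_mem_Ico ⟨hl.le, hr⟩ ((half_le_dbk hi).trans_lt hl)

lemma specG_gFun : SpecG gFun :=
  ⟨fun _ hx => gFun_of_le_half hx.2,
    fun i hi => by rw [gFun_dbk (by omega), one_div_logb_alpha hi],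
    fun i hi _ hx => by rw [gFun_eqOn_Icc hi hx, gFun_dbk hi, gFun_dbk (by omega)],
    fun _ hx => gFun_of_one_le hx⟩

lemma SpecG.apply_dbk {g : ℝ → ℝ} (hg : SpecG g) {i : ℕ} (hi : 1 ≤ i) :
    g (dbk i) = gBreak i := by
  obtain rfl | hi := hi.eq_or_lt
  · rw [dbk_one, hg.1 _ ⟨by norm_num, le_rfl⟩, gBreak_one]
  · rw [hg.2.1 i hi, one_div_logb_alpha hi]

lemma SpecG.eqOn_gFun {g : ℝ → ℝ} (hg : SpecG g) : EqOn g gFun (Ici 0) := by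
  intro x hx
  rcases le_or_gt x (1 / 2) with h | h
  · rw [hg.1 x ⟨hx, h⟩, gFun_of_le_half h]
  rcases le_or_gt 1 x with h1 | h1
  · rw [hg.2.2.2 x h1, gFun_of_one_le h1]
  obtain ⟨hi, hxi⟩ := mem_Ico_dbkIndex ⟨h.le, h1⟩
  rw [hg.2.2.1 _ hi x (Ico_subset_Icc_self hxi), gFun_eqOn_Icc hi (Ico_subset_Icc_self hxi),
    hg.apply_dbk hi, hg.apply_dbk (by omega)]

lemma continuousOn_gFun_Iic_dbk (n : ℕ) : ContinuousOn gFun (Iic (dbk (n + 1))) := by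
  induction n with
  | zero =>
    rw [zero_add, dbk_one]
    exact continuousOn_const.congr fun _ hx => gFun_of_le_half hx
  | succ n ih =>
    rw [← Iic_union_Icc_eq_Iic (dbk_strictMono.monotone (n + 1).le_succ)]
    exact ih.union_of_isClosed ((continuous_interp _ _ _ _).continuousOn.congr
      (gFun_eqOn_Icc (by omega))) isClosed_Iic isClosed_Icc

lemma antitoneOn_gFun_Iic_dbk (n : ℕ) : AntitoneOn gFun (Iic (dbk (n + 1))) := by
  induction n with
  | zero =>
    rw [zero_add, dbk_one]
    exact fun x hx y hy _ => by rw [gFun_of_le_half hx, gFun_of_le_half hy]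
  | succ n ih =>
    have hlt := dbk_strictMono (n + 1).lt_succ_self
    rw [← Iic_union_Icc_eq_Iic hlt.le]
    refine ih.union_right ?_ isGreatest_Iic (isLeast_Icc hlt.le)
    exact ((antitone_interp hlt (gBreak_antitone (n + 1).le_succ)).antitoneOn _).congr
      (gFun_eqOn_Icc (by omega)).symm

lemma gFun_nonneg (x : ℝ) : 0 ≤ gFun x := by
  rcases le_or_gt 1 x with h1 | h1
  · rw [gFun_of_one_le h1]
  obtain ⟨n, hn⟩ := exists_lt_dbk h1
  calc 0 ≤ gBreak (n + 1) := (gBreak_pos _).le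
    _ = gFun (dbk (n + 1)) := (gFun_dbk (by omega)).symm
    _ ≤ gFun x := antitoneOn_gFun_Iic_dbk n (mem_Iic.2 hn.le) (mem_Iic.2 le_rfl) hn.le

lemma antitone_gFun : Antitone gFun := by
  intro x y hxy
  rcases le_or_gt 1 y with hy | hy
  · rw [gFun_of_one_le hy]
    exact gFun_nonneg x
  obtain ⟨n, hn⟩ := exists_lt_dbk hy
  exact antitoneOn_gFun_Iic_dbk n (mem_Iic.2 (hxy.trans hn.le)) (mem_Iic.2 hn.le) hxy

lemma continuousAt_gFun_one : ContinuousAt gFun 1 := by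
  rw [ContinuousAt, gFun_of_one_le le_rfl]
  refine tendsto_order.2 ⟨fun a ha => .of_forall fun y => ha.trans_le (gFun_nonneg y),
    fun a ha => ?_⟩
  obtain ⟨k, hk, hka⟩ := exists_gBreak_lt ha
  filter_upwards [Ioi_mem_nhds (dbk_lt_one k)] with y hy
  calc gFun y ≤ gFun (dbk k) := antitone_gFun hy.le
    _ = gBreak k := gFun_dbk hk
    _ < a := hka

lemma continuous_gFun : Continuous gFun := by
  refine continuous_iff_continuousAt.2 fun x => ?_
  rcases lt_trichotomy x 1 with hx | rfl | hx
  · obtain ⟨n, hn⟩ := exists_lt_dbk hx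
    exact (continuousOn_gFun_Iic_dbk n).continuousAt (Iic_mem_nhds hn)
  · exact continuousAt_gFun_one
  · exact continuousAt_const.congr <| by
      filter_upwards [Ioi_mem_nhds hx] with y hy
      exact (gFun_of_one_le hy.le).symm

def dyadicSubring : Subring ℝ where
  carrier := {x | IsDyadic x}
  zero_mem' := ⟨0, 0, by simp⟩
  one_mem' := ⟨1, 0, by simp⟩
  add_mem' := by
    rintro _ _ ⟨m₁, n₁, rfl⟩ ⟨m₂, n₂, rfl⟩
    refine ⟨m₁ * 2 ^ n₂ + m₂ * 2 ^ n₁, n₁ + n₂, ?_⟩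
    push_cast
    field_simp
    ring
  neg_mem' := by
    rintro _ ⟨m, n, rfl⟩
    exact ⟨-m, n, by push_cast; ring⟩
  mul_mem' := by
    rintro _ _ ⟨m₁, n₁, rfl⟩ ⟨m₂, n₂, rfl⟩
    exact ⟨m₁ * m₂, n₁ + n₂, by push_cast; ring⟩

lemma isDyadic_one_div_two_pow (n : ℕ) : IsDyadic (1 / 2 ^ n) := ⟨1, n, by simp⟩

lemma isDyadic_gFun {x : ℝ} (hx : IsDyadic x) : IsDyadic (gFun x) := by
  rcases le_or_gt x (1 / 2) with h | h
  · rw [gFun_of_le_half h]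
    exact dyadicSubring.one_mem
  rcases le_or_gt 1 x with h1 | h1
  · rw [gFun_of_one_le h1]
    exact dyadicSubring.zero_mem
  obtain ⟨hi, hxi⟩ := mem_Ico_dbkIndex ⟨h.le, h1⟩
  have hdbk (j : ℕ) : dbk j ∈ dyadicSubring :=
    dbk_eq j ▸ sub_mem (one_mem _) (isDyadic_one_div_two_pow j)
  rw [gFun_eqOn_Icc hi (Ico_subset_Icc_self hxi)]
  refine interp_mem_subring (hdbk _) (isDyadic_one_div_two_pow _) (isDyadic_one_div_two_pow _) hx ?_
  rw [dbk_succ_sub, one_div, inv_inv]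
  exact ⟨2 ^ (dbkIndex x + 1), 0, by simp⟩

/-- `g` is well defined (a function satisfying the specification exists and is
uniquely determined on `[0,∞)`), continuous on `[0,∞)` (in particular continuous at `1`),
monotonically nonincreasing, and maps every dyadic rational in `[0,∞)` to a dyadic rational. -/
theorem statement6 :
    ∃ g : ℝ → ℝ, SpecG g ∧
      (∀ g' : ℝ → ℝ, SpecG g' → Set.EqOn g g' (Set.Ici 0)) ∧
      ContinuousOn g (Set.Ici 0) ∧
      ContinuousAt g 1 ∧
      AntitoneOn g (Set.Ici 0) ∧
      (∀ x : ℝ, 0 ≤ x → IsDyadic x → IsDyadic (g x)) :=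
  ⟨gFun, specG_gFun, fun _ hg => hg.eqOn_gFun.symm, continuous_gFun.continuousOn,
    continuous_gFun.continuousAt, antitone_gFun.antitoneOn _, fun _ _ hx => isDyadic_gFun hx⟩
end

section
/- The function g has no polynomial modulus of continuity with respect to the precision argument: for every polynomial p with natural-number coefficients there exist n ∈ ℕ and x, y ∈ [0, 1] such that |x − y| ≤ 2^{-p(n)} and |g(x) − g(y)| > 2^{-n}. -/
/-!
At the breakpoint `d_i` with `i = 2^(2^m)` we have `g(d_i) = 2^{-m}`, while `g(1) = 0` and
`|d_i - 1| = 2^{-i}`. So with precision `n = m + 1` the points `d_i` and `1` violate the modulus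
`p` as soon as `p(m + 1) ≤ 2^(2^m)`; since `p(n) ≤ 2^(p(1) + n deg p)`, this holds for
`m = 2 (p(1) + deg p)`.
-/

namespace Polynomial

lemma eval_le_eval_one_mul_pow (p : ℕ[X]) {n : ℕ} (hn : 1 ≤ n) :
    p.eval n ≤ p.eval 1 * n ^ p.natDegree := by
  rw [eval_eq_sum_range, eval_eq_sum_range, Finset.sum_mul]
  refine Finset.sum_le_sum fun i hi => ?_
  rw [one_pow, mul_one]
  exact Nat.mul_le_mul_left _ (Nat.pow_le_pow_right hn (Nat.lt_succ_iff.mp (Finset.mem_range.mp hi)))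

lemma eval_le_two_pow (p : ℕ[X]) {n : ℕ} (hn : 1 ≤ n) :
    p.eval n ≤ 2 ^ (p.eval 1 + n * p.natDegree) :=
  calc p.eval n ≤ p.eval 1 * n ^ p.natDegree := p.eval_le_eval_one_mul_pow hn
    _ ≤ 2 ^ p.eval 1 * (2 ^ n) ^ p.natDegree :=
      Nat.mul_le_mul (Nat.lt_two_pow_self).le (Nat.pow_le_pow_left Nat.lt_two_pow_self.le _)
    _ = 2 ^ (p.eval 1 + n * p.natDegree) := by rw [← pow_mul, ← pow_add]

lemma exists_eval_succ_le_two_pow_two_pow (p : ℕ[X]) :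
    ∃ m : ℕ, p.eval (m + 1) ≤ 2 ^ 2 ^ m := by
  set c := p.eval 1 + p.natDegree
  refine ⟨2 * c, (p.eval_le_two_pow (by omega)).trans (Nat.pow_le_pow_right two_pos ?_)⟩
  have hc : 2 * c ≤ 2 ^ c := by
    rcases c with _ | c
    · simp
    · rw [pow_succ, mul_comm]
      exact Nat.mul_le_mul_right _ Nat.lt_two_pow_self
  calc p.eval 1 + (2 * c + 1) * p.natDegree ≤ (2 * c + 1) * c := by
        rw [mul_add (2 * c + 1)]; nlinarith
    _ ≤ 2 * c * (c + 1) := by nlinarith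
    _ ≤ 2 ^ c * 2 ^ c := Nat.mul_le_mul hc Nat.lt_two_pow_self
    _ = 2 ^ (2 * c) := by rw [← pow_add, ← two_mul]

end Polynomial

lemma alpha_two_pow_two_pow (m : ℕ) : alpha (2 ^ 2 ^ m) = 2 ^ 2 ^ m := by
  classical
  exact le_antisymm (Nat.findGreatest_le _) (Nat.le_findGreatest le_rfl ⟨m, rfl⟩)

lemma dbk_mem_Icc (i : ℕ) : dbk i ∈ Set.Icc (0 : ℝ) 1 := by
  have h0 : (0 : ℝ) < 2 ^ (-(i : ℤ)) := zpow_pos two_pos _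
  have h1 : (2 : ℝ) ^ (-(i : ℤ)) ≤ 1 := zpow_le_one_of_nonpos₀ one_le_two (by omega)
  exact ⟨by unfold dbk; linarith, by unfold dbk; linarith⟩

lemma abs_dbk_sub_one (i : ℕ) : |dbk i - 1| = (2 : ℝ) ^ (-(i : ℤ)) := by
  rw [dbk, sub_sub_cancel_left, abs_neg, abs_of_pos (zpow_pos two_pos _)]

namespace SpecG

variable {g : ℝ → ℝ}

lemma apply_one (hg : SpecG g) : g 1 = 0 :=
  hg.2.2.2 1 Set.self_mem_Ici

lemma apply_dbk_two_pow_two_pow (hg : SpecG g) (m : ℕ) :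
    g (dbk (2 ^ 2 ^ m)) = (2 : ℝ) ^ (-(m : ℤ)) := by
  have hi : 2 ≤ 2 ^ 2 ^ m := Nat.le_self_pow (pow_pos two_pos m).ne' 2
  rw [hg.2.1 _ hi, alpha_two_pow_two_pow, Nat.cast_pow, Nat.cast_ofNat, Real.logb_pow,
    Real.logb_self_eq_one one_lt_two, mul_one, zpow_neg, zpow_natCast, Nat.cast_pow,
    Nat.cast_ofNat, one_div]

end SpecG

/-- `g` has no polynomial modulus of continuity with respect to the
precision argument. -/
theorem statement8 (g : ℝ → ℝ) (hg : SpecG g) :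
    ∀ p : Polynomial ℕ, ∃ n : ℕ, ∃ x ∈ Set.Icc (0 : ℝ) 1, ∃ y ∈ Set.Icc (0 : ℝ) 1,
      |x - y| ≤ (2 : ℝ) ^ (-((p.eval n : ℕ) : ℤ)) ∧ (2 : ℝ) ^ (-(n : ℤ)) < |g x - g y| := by
  intro p
  obtain ⟨m, hm⟩ := p.exists_eval_succ_le_two_pow_two_pow
  refine ⟨m + 1, dbk (2 ^ 2 ^ m), dbk_mem_Icc _, 1, ⟨zero_le_one, le_rfl⟩, ?_, ?_⟩
  · rw [abs_dbk_sub_one]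
    exact zpow_le_zpow_right₀ one_le_two (by omega)
  · rw [hg.apply_dbk_two_pow_two_pow, hg.apply_one, sub_zero, abs_of_pos (zpow_pos two_pos _)]
    exact zpow_lt_zpow_right₀ one_lt_two (by omega)
end

section
/- There exists a continuous function h : [0,∞) → ℝ mapping every dyadic rational to a dyadic rational that has no polynomial modulus of continuity with respect to either the extension argument or the precision argument: (i) for every polynomial p with natural-number coefficients there exist k ∈ ℕ and x, y ∈ [0, 2^k] with |x − y| ≤ 2^{-p(k)} and |h(x) − h(y)| > 1; and (ii) for every polynomial q with natural-number coefficients there exist n ∈ ℕ and x, y ∈ [0, 1] with |x − y| ≤ 2^{-q(n)} and |h(x) − h(y)| > 2^{-n}. -/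
open Set Filter Function Metric Polynomial Asymptotics

namespace NoPolyModulus

def dyadicSubring : Subring ℝ where
  carrier := {x | IsDyadic x}
  zero_mem' := ⟨0, 0, by simp⟩
  one_mem' := ⟨1, 0, by simp⟩
  add_mem' := by
    rintro _ _ ⟨a, m, rfl⟩ ⟨b, n, rfl⟩
    exact ⟨a * 2 ^ n + b * 2 ^ m, m + n, by field_simp; push_cast; ring⟩
  mul_mem' := by
    rintro _ _ ⟨a, m, rfl⟩ ⟨b, n, rfl⟩
    exact ⟨a * b, m + n, by field_simp; push_cast; ring⟩
  neg_mem' := by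
    rintro _ ⟨a, m, rfl⟩
    exact ⟨-a, m, by push_cast; ring⟩

theorem mem_dyadicSubring {x : ℝ} : x ∈ dyadicSubring ↔ IsDyadic x := Iff.rfl

theorem inv_two_pow_lt {m n : ℕ} (h : m < n) : ((2 : ℝ) ^ n)⁻¹ < (2 ^ m)⁻¹ :=
  inv_strictAnti₀ (by positivity) (pow_lt_pow_right₀ one_lt_two h)

theorem inv_two_pow_lt_half {n : ℕ} (hn : 1 < n) : ((2 : ℝ) ^ n)⁻¹ < 1 / 2 := by
  simpa using inv_two_pow_lt hn

theorem abs_sub_add_inv_two_pow_le {N m : ℕ} (h : N ≤ m) (x : ℝ) :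
    |x - (x + (2 ^ m)⁻¹)| ≤ (2 : ℝ) ^ (-(N : ℤ)) := by
  rw [sub_add_cancel_left, abs_neg, abs_of_pos (by positivity), zpow_neg, zpow_natCast]
  exact inv_anti₀ (by positivity) (pow_le_pow_right₀ one_le_two h)

theorem eventually_eval_le_two_pow (p : ℕ[X]) : ∀ᶠ k in atTop, p.eval k ≤ 2 ^ k := by
  set P := p.map (Nat.castRingHom ℝ)
  have hP : (fun k : ℕ => P.eval (k : ℝ)) =O[atTop] fun k : ℕ => (k : ℝ) ^ P.natDegree :=
    (P.isBigO_atTop_of_degree_le (X ^ P.natDegree) (by simp)).comp_tendsto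
      tendsto_natCast_atTop_atTop |>.congr (fun _ => rfl) (fun _ => by simp)
  filter_upwards [(hP.trans_isLittleO
    (isLittleO_pow_const_const_pow_of_one_lt _ one_lt_two)).bound one_pos] with k hk
  exact_mod_cast (by simpa [P] using hk : ((p.eval k : ℕ) : ℝ) ≤ 2 ^ k)

noncomputable def tent (c : ℝ) (m : ℕ) (a x : ℝ) : ℝ := max 0 (a - a * 2 ^ m * |x - c|)

section Tent

variable {c a x : ℝ} {m : ℕ}

theorem continuous_tent : Continuous (tent c m a) := by
  unfold tent; fun_prop

theorem tent_nonneg : 0 ≤ tent c m a x := le_max_left _ _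

theorem tent_le (ha : 0 ≤ a) : tent c m a x ≤ a :=
  max_le ha (sub_le_self _ (by positivity))

theorem tent_self (ha : 0 ≤ a) : tent c m a c = a := by
  simp [tent, ha]

theorem tent_eq_zero (ha : 0 ≤ a) (hx : (2 ^ m)⁻¹ ≤ |x - c|) : tent c m a x = 0 := by
  refine max_eq_left (sub_nonpos.mpr ?_)
  calc a = a * 2 ^ m * (2 ^ m)⁻¹ := by field_simp
    _ ≤ a * 2 ^ m * |x - c| := by gcongr

theorem tent_add_inv_two_pow (ha : 0 ≤ a) : tent c m a (c + (2 ^ m)⁻¹) = 0 :=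
  tent_eq_zero ha (by simp)

theorem support_tent_subset (ha : 0 ≤ a) : support (tent c m a) ⊆ ball c (2 ^ m)⁻¹ := by
  intro x hx
  by_contra h
  exact hx (tent_eq_zero ha (not_lt.mp (by rwa [mem_ball, Real.dist_eq] at h)))

theorem isDyadic_tent (hc : IsDyadic c) (ha : IsDyadic a) (hx : IsDyadic x) :
    IsDyadic (tent c m a x) := by
  have hxc : |x - c| ∈ dyadicSubring := by
    rcases abs_choice (x - c) with h | h <;> rw [h]
    exacts [sub_mem hx hc, neg_mem (sub_mem hx hc)]
  have h2 : (2 : ℝ) ∈ dyadicSubring := ⟨2, 0, by norm_num⟩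
  rcases max_choice 0 (a - a * 2 ^ m * |x - c|) with h | h <;> rw [← mem_dyadicSubring, tent, h]
  exacts [zero_mem _, sub_mem ha (mul_mem (mul_mem ha (pow_mem h2 m)) hxc)]

theorem add_inv_two_pow_mem_ball {r : ℝ} (h : (2 ^ m)⁻¹ < r) :
    c + (2 ^ m)⁻¹ ∈ ball c r := by
  rwa [mem_ball, Real.dist_eq, add_sub_cancel_left, abs_of_pos (by positivity)]

theorem abs_tent_self_sub_tent_add_inv_two_pow (ha : 0 ≤ a) :
    |tent c m a c - tent c m a (c + (2 ^ m)⁻¹)| = a := by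
  rw [tent_self ha, tent_add_inv_two_pow ha, sub_zero, abs_of_nonneg ha]

end Tent

section DisjointSupports

variable {ι α M : Type*} [AddCommMonoid M] {f : ι → α → M} {I : ι → Set α}

theorem apply_eq_zero_of_mem_of_ne (hI : Pairwise (Disjoint on I))
    (hf : ∀ i, support (f i) ⊆ I i) {i j : ι} {x : α} (hx : x ∈ I j) (hij : i ≠ j) :
    f i x = 0 :=
  notMem_support.mp fun h => (hI hij).notMem_of_mem_right hx (hf i h)

theorem exists_forall_ne_apply_eq_zero [Nonempty ι] (hI : Pairwise (Disjoint on I))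
    (hf : ∀ i, support (f i) ⊆ I i) (x : α) : ∃ j, ∀ i ≠ j, f i x = 0 := by
  by_cases h : ∃ j, x ∈ I j
  · obtain ⟨j, hj⟩ := h
    exact ⟨j, fun i => apply_eq_zero_of_mem_of_ne hI hf hj⟩
  · push Not at h
    exact ⟨Classical.arbitrary ι, fun i _ => notMem_support.mp fun hi => h i (hf i hi)⟩

end DisjointSupports

section Inner

noncomputable def innerBump (j : ℕ) : ℝ → ℝ :=
  tent (3 / 2 ^ (j + 2)) (2 ^ j + 2) (2 / 2 ^ j)

noncomputable def innerBall (j : ℕ) : Set ℝ := ball (3 / 2 ^ (j + 2)) (2 ^ (j + 2))⁻¹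

theorem support_innerBump_subset (j : ℕ) : support (innerBump j) ⊆ innerBall j :=
  (support_tent_subset (by positivity)).trans <|
    ball_subset_ball (inv_two_pow_lt (Nat.add_lt_add_right j.lt_two_pow_self 2)).le

theorem innerBall_subset (j : ℕ) : innerBall j ⊆ Ioo (2 ^ (j + 1))⁻¹ (2 ^ j)⁻¹ := by
  rw [innerBall, Real.ball_eq_Ioo]
  apply Ioo_subset_Ioo (le_of_eq ?_) (le_of_eq ?_)
  · rw [pow_succ _ (j + 1)]; field_simp; norm_num
  · rw [pow_add]; field_simp; norm_num

theorem innerBall_subset_Ioo_zero_one (j : ℕ) : innerBall j ⊆ Ioo 0 1 :=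
  (innerBall_subset j).trans <|
    Ioo_subset_Ioo (by positivity) (inv_le_one_of_one_le₀ (one_le_pow₀ one_le_two))

theorem pairwise_disjoint_innerBall : Pairwise (Disjoint on innerBall) :=
  (Antitone.pairwise_disjoint_on_Ioo_succ (f := fun j : ℕ => ((2 : ℝ) ^ j)⁻¹)
    fun _ _ h => inv_anti₀ (by positivity) (pow_le_pow_right₀ one_le_two h)).mono
    fun i j h => h.mono (innerBall_subset i) (innerBall_subset j)

end Inner

section Outer

noncomputable def outerBump (k : ℕ) : ℝ → ℝ := tent (k + 3 / 2) (2 ^ k + 2) 2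

noncomputable def outerBall (k : ℕ) : Set ℝ := ball (k + 3 / 2) (1 / 2)

theorem support_outerBump_subset (k : ℕ) : support (outerBump k) ⊆ outerBall k :=
  (support_tent_subset zero_le_two).trans <|
    ball_subset_ball (inv_two_pow_lt_half (Nat.lt_add_left _ one_lt_two)).le

theorem outerBall_subset (k : ℕ) : outerBall k ⊆ Ioo (k + 1) (k + 2) := by
  rw [outerBall, Real.ball_eq_Ioo]
  apply Ioo_subset_Ioo <;> norm_num <;> linarith

theorem outerBall_subset_Icc {k : ℕ} (hk : k + 2 ≤ 2 ^ k) : outerBall k ⊆ Icc 0 (2 ^ k) := by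
  intro z hz
  have hz := outerBall_subset k hz
  have hk : (k : ℝ) + 2 ≤ 2 ^ k := by exact_mod_cast hk
  exact ⟨by linarith [hz.1, (k.cast_nonneg : (0 : ℝ) ≤ k)], by linarith [hz.2]⟩

theorem pairwise_disjoint_outerBall : Pairwise (Disjoint on outerBall) := fun i j h =>
  ball_disjoint_ball <| by
    rw [dist_add_right, Nat.dist_cast_real]
    linarith [Nat.pairwise_one_le_dist h]

theorem locallyFinite_outerBall : LocallyFinite outerBall := by
  intro x
  refine ⟨ball x 1, ball_mem_nhds x one_pos, (finite_Iic ⌈x⌉₊).subset ?_⟩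
  rintro k ⟨y, hyk, hyx⟩
  have hk := outerBall_subset k hyk
  rw [mem_ball, Real.dist_eq, abs_lt] at hyx
  have : (k : ℝ) ≤ ⌈x⌉₊ := by linarith [hk.1, Nat.le_ceil x]
  exact mem_Iic.mpr (mod_cast this)

end Outer

noncomputable def innerSum (x : ℝ) : ℝ := ∑' j, innerBump j x

noncomputable def outerSum (x : ℝ) : ℝ := ∑ᶠ k, outerBump k x

noncomputable def bumpSum (x : ℝ) : ℝ := innerSum x + outerSum x

theorem continuous_innerSum : Continuous innerSum := by
  refine continuous_tsum (fun j => continuous_tent) (summable_geometric_two.mul_left 2)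
    fun j x => ?_
  rw [Real.norm_eq_abs, innerBump, abs_of_nonneg tent_nonneg, one_div_pow, ← div_eq_mul_one_div]
  exact tent_le (by positivity)

theorem continuous_outerSum : Continuous outerSum :=
  continuous_finsum (fun _ => continuous_tent)
    (locallyFinite_outerBall.subset support_outerBump_subset)

theorem continuous_bumpSum : Continuous bumpSum :=
  continuous_innerSum.add continuous_outerSum

theorem innerSum_eq {j : ℕ} {x : ℝ} (hx : x ∈ innerBall j) : innerSum x = innerBump j x :=
  tsum_eq_single j fun _ =>
    apply_eq_zero_of_mem_of_ne pairwise_disjoint_innerBall support_innerBump_subset hx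

theorem outerSum_eq {k : ℕ} {x : ℝ} (hx : x ∈ outerBall k) : outerSum x = outerBump k x :=
  finsum_eq_single _ k fun _ =>
    apply_eq_zero_of_mem_of_ne pairwise_disjoint_outerBall support_outerBump_subset hx

theorem innerSum_eq_zero {x : ℝ} (hx : 1 ≤ x) : innerSum x = 0 := by
  have h : ∀ j, innerBump j x = 0 := fun j => notMem_support.mp fun hj =>
    (innerBall_subset_Ioo_zero_one j (support_innerBump_subset j hj)).2.not_ge hx
  simp [innerSum, h]

theorem outerSum_eq_zero {x : ℝ} (hx : x ≤ 1) : outerSum x = 0 := by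
  have h : ∀ k, outerBump k x = 0 := fun k => notMem_support.mp fun hk => by
    linarith [(outerBall_subset k (support_outerBump_subset k hk)).1,
      (k.cast_nonneg : (0 : ℝ) ≤ k)]
  simp [outerSum, h]

theorem bumpSum_eq_innerBump {j : ℕ} {x : ℝ} (hx : x ∈ innerBall j) :
    bumpSum x = innerBump j x := by
  rw [bumpSum, innerSum_eq hx, outerSum_eq_zero (innerBall_subset_Ioo_zero_one j hx).2.le,
    add_zero]

theorem bumpSum_eq_outerBump {k : ℕ} {x : ℝ} (hx : x ∈ outerBall k) :
    bumpSum x = outerBump k x := by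
  have := (outerBall_subset k hx).1
  rw [bumpSum, outerSum_eq hx, innerSum_eq_zero (by linarith [(k.cast_nonneg : (0 : ℝ) ≤ k)]),
    zero_add]

theorem isDyadic_bumpSum {x : ℝ} (hx : IsDyadic x) : IsDyadic (bumpSum x) := by
  obtain ⟨j, hj⟩ :=
    exists_forall_ne_apply_eq_zero pairwise_disjoint_innerBall support_innerBump_subset x
  obtain ⟨k, hk⟩ :=
    exists_forall_ne_apply_eq_zero pairwise_disjoint_outerBall support_outerBump_subset x
  rw [bumpSum, innerSum, outerSum, tsum_eq_single j hj, finsum_eq_single _ k hk]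
  refine dyadicSubring.add_mem (isDyadic_tent ?_ ?_ hx) (isDyadic_tent ?_ ?_ hx)
  · exact ⟨3, j + 2, by simp⟩
  · exact ⟨2, j, by simp⟩
  · exact ⟨2 * k + 3, 1, by push_cast; ring⟩
  · exact ⟨2, 0, by simp⟩

end NoPolyModulus

open NoPolyModulus in
/-- there exists a continuous function `h : [0,∞) → ℝ` mapping every dyadic
rational to a dyadic rational that has no polynomial modulus of continuity with respect to
either the extension argument or the precision argument. -/
theorem statement9 :
    ∃ h : ℝ → ℝ,
      ContinuousOn h (Set.Ici 0) ∧
      (∀ x : ℝ, 0 ≤ x → IsDyadic x → IsDyadic (h x)) ∧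
      (∀ p : Polynomial ℕ, ∃ k : ℕ,
        ∃ x ∈ Set.Icc (0 : ℝ) (2 ^ k), ∃ y ∈ Set.Icc (0 : ℝ) (2 ^ k),
          |x - y| ≤ (2 : ℝ) ^ (-((p.eval k : ℕ) : ℤ)) ∧ 1 < |h x - h y|) ∧
      (∀ q : Polynomial ℕ, ∃ n : ℕ,
        ∃ x ∈ Set.Icc (0 : ℝ) 1, ∃ y ∈ Set.Icc (0 : ℝ) 1,
          |x - y| ≤ (2 : ℝ) ^ (-((q.eval n : ℕ) : ℤ)) ∧ (2 : ℝ) ^ (-(n : ℤ)) < |h x - h y|) := by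
  refine ⟨bumpSum, continuous_bumpSum.continuousOn, fun x _ hx => isDyadic_bumpSum hx,
    fun p => ?_, fun q => ?_⟩
  · obtain ⟨k, hpk, hk⟩ :=
      ((eventually_eval_le_two_pow p).and (eventually_eval_le_two_pow (X + 2))).exists
    have hx : (k + 3 / 2 : ℝ) ∈ outerBall k := mem_ball_self one_half_pos
    have hy : (k + 3 / 2 + (2 ^ (2 ^ k + 2))⁻¹ : ℝ) ∈ outerBall k :=
      add_inv_two_pow_mem_ball (inv_two_pow_lt_half (Nat.lt_add_left _ one_lt_two))
    have hIcc := outerBall_subset_Icc (by simpa using hk)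
    refine ⟨k, _, hIcc hx, _, hIcc hy, abs_sub_add_inv_two_pow_le (by omega) _, ?_⟩
    rw [bumpSum_eq_outerBump hx, bumpSum_eq_outerBump hy, outerBump,
      abs_tent_self_sub_tent_add_inv_two_pow zero_le_two]
    exact one_lt_two
  · obtain ⟨n, hqn⟩ := (eventually_eval_le_two_pow q).exists
    have hx : (3 / 2 ^ (n + 2) : ℝ) ∈ innerBall n := mem_ball_self (by positivity)
    have hy : (3 / 2 ^ (n + 2) + (2 ^ (2 ^ n + 2))⁻¹ : ℝ) ∈ innerBall n :=
      add_inv_two_pow_mem_ball (inv_two_pow_lt (Nat.add_lt_add_right n.lt_two_pow_self 2))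
    have hIcc : innerBall n ⊆ Icc 0 1 :=
      (innerBall_subset_Ioo_zero_one n).trans Ioo_subset_Icc_self
    refine ⟨n, _, hIcc hx, _, hIcc hy, abs_sub_add_inv_two_pow_le (by omega) _, ?_⟩
    rw [bumpSum_eq_innerBump hx, bumpSum_eq_innerBump hy, innerBump,
      abs_tent_self_sub_tent_add_inv_two_pow (by positivity), zpow_neg, zpow_natCast,
      div_eq_mul_inv]
    exact lt_two_mul_self (by positivity)
end

section
/- For all j, n ∈ ℕ with n + 3 ≤ 2^{k(j)}, and all x, d ∈ [j, j + 1/2] with |x − d| ≤ 2^{-(n+3)}, one has |(d − j) − F(x)| ≤ 2^{-(n+2)}. -/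
/-- `kmin j = min { i : j + 1/2 < 2^i }`. -/
noncomputable def kmin (j : ℕ) : ℕ := sInf {i : ℕ | (j : ℝ) + 1 / 2 < 2 ^ i}

/-- The specification of the function `F` of the paper: `F(j) = 0` for every `j ∈ ℕ`,
`F(j + 1/2) = 1/2 + 2^{-2^{k(j)}}`, and `F` is affine on each of `[j, j + 1/2]` and
`[j + 1/2, j + 1]`. -/
def SpecFF (F : ℝ → ℝ) : Prop :=
  (∀ j : ℕ, F (j : ℝ) = 0) ∧
  (∀ j : ℕ, F ((j : ℝ) + 1 / 2) = 1 / 2 + (2 : ℝ) ^ (-(2 ^ kmin j : ℤ))) ∧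
  (∀ j : ℕ, ∀ x ∈ Set.Icc (j : ℝ) ((j : ℝ) + 1 / 2),
    F x = interp (j : ℝ) ((j : ℝ) + 1 / 2) (F (j : ℝ)) (F ((j : ℝ) + 1 / 2)) x) ∧
  (∀ j : ℕ, ∀ x ∈ Set.Icc ((j : ℝ) + 1 / 2) ((j : ℝ) + 1),
    F x = interp ((j : ℝ) + 1 / 2) ((j : ℝ) + 1) (F ((j : ℝ) + 1 / 2)) (F ((j : ℝ) + 1)) x)

/-- for all `j, n ∈ ℕ` with `n + 3 ≤ 2^{kmin j}`, and all
`x, d ∈ [j, j + 1/2]` with `|x − d| ≤ 2^{-(n+3)}`, one has `|(d − j) − F(x)| ≤ 2^{-(n+2)}`. -/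
theorem statement14 (F : ℝ → ℝ) (hF : SpecFF F) :
    ∀ j n : ℕ, n + 3 ≤ 2 ^ kmin j →
      ∀ x ∈ Set.Icc (j : ℝ) ((j : ℝ) + 1 / 2), ∀ d ∈ Set.Icc (j : ℝ) ((j : ℝ) + 1 / 2),
        |x - d| ≤ (2 : ℝ) ^ (-(n + 3 : ℤ)) →
        |(d - (j : ℝ)) - F x| ≤ (2 : ℝ) ^ (-(n + 2 : ℤ)) := by
  obtain ⟨h0, h1, h2, _⟩ := hF
  intro j n hn x hx d hd hxd
  set ε : ℝ := (2 : ℝ) ^ (-(2 ^ kmin j : ℤ)) with hε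
  have hεpos : 0 < ε := by positivity
  have hεle : ε ≤ (2 : ℝ) ^ (-(n + 3 : ℤ)) := by
    apply zpow_le_zpow_right₀ (by norm_num)
    have : (n : ℤ) + 3 ≤ (2 ^ kmin j : ℤ) := by exact_mod_cast hn
    omega
  have hFx : F x = (x - j) * (1 + 2 * ε) := by
    rw [h2 j x hx, interp, h0 j, h1 j, ← hε]
    ring
  have hxj : 0 ≤ x - j := by linarith [hx.1]
  have hxj2 : x - j ≤ 1 / 2 := by linarith [hx.2]
  have key : (d - (j : ℝ)) - F x = (d - x) - (x - j) * (2 * ε) := by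
    rw [hFx]; ring
  rw [key]
  have h1' : |d - x| ≤ (2 : ℝ) ^ (-(n + 3 : ℤ)) := by rwa [abs_sub_comm]
  have h2' : |(x - j) * (2 * ε)| ≤ (2 : ℝ) ^ (-(n + 3 : ℤ)) := by
    rw [abs_of_nonneg (by positivity)]
    nlinarith
  calc |(d - x) - (x - j) * (2 * ε)| ≤ |d - x| + |(x - j) * (2 * ε)| := abs_sub _ _
    _ ≤ (2 : ℝ) ^ (-(n + 3 : ℤ)) + (2 : ℝ) ^ (-(n + 3 : ℤ)) := by linarith
    _ = (2 : ℝ) ^ (-(n + 2 : ℤ)) := by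
        rw [show (-(n + 2 : ℤ)) = (-(n + 3 : ℤ)) + 1 by ring, zpow_add₀ (by norm_num)]
        ring
end
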